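/- arXiv:2207.11764 — 6 statements merged into one kernel-verified Lean document; each statement's English description precedes it below -/
import Mathlib

section
/- If A ⊆ ℕ has positive upper asymptotic density, then for every infinite set X ⊆ ℕ the intersection Δ(A) ∩ Δ(X) is nonempty. -/
open scoped Classical

noncomputable def upperDensity (A : Set ℕ) : ℝ :=
  Filter.limsup (fun n => (((Finset.Icc 1 n).filter (fun m => m ∈ A)).card : ℝ) / n) Filter.atTop

noncomputable def lowerDensity (A : Set ℕ) : ℝ :=
  Filter.liminf (fun n => (((Finset.Icc 1 n).filter (fun m => m ∈ A)).card : ℝ) / n) Filter.atTop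

/-- The difference set Δ(X) = {x' - x : x, x' ∈ X, x' > x}. -/
def diffSet (X : Set ℕ) : Set ℕ := {d | ∃ x ∈ X, ∃ x' ∈ X, x < x' ∧ x' - x = d}

/-- A is thick if it contains arbitrarily long intervals of consecutive integers. -/
def Thick (A : Set ℕ) : Prop := ∀ k : ℕ, ∃ a : ℕ, ∀ i < k, a + i ∈ A

/-- A is a Δ-set if it contains the difference set of some infinite X. -/
def IsDeltaSet (A : Set ℕ) : Prop := ∃ X : Set ℕ, X.Infinite ∧ diffSet X ⊆ A

theorem stmt2 (A : Set ℕ) (h : 0 < upperDensity A) (X : Set ℕ) (hX : X.Infinite) :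
    (diffSet A ∩ diffSet X).Nonempty := by
  set f : ℕ → ℝ := fun n => (((Finset.Icc 1 n).filter (fun m => m ∈ A)).card : ℝ) / n with hf
  set c : ℝ := upperDensity A / 2 with hc
  have hc0 : 0 < c := by positivity
  have hbdd : Filter.IsCoboundedUnder (· ≤ ·) Filter.atTop f := by
    refine Filter.IsBoundedUnder.isCoboundedUnder_le (Filter.isBoundedUnder_of ⟨0, fun n => ?_⟩)
    simp only [hf]
    positivity
  have hfreq : ∃ᶠ n in Filter.atTop, c < f n := by
    apply Filter.frequently_lt_of_lt_limsup hbdd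
    have : upperDensity A = Filter.limsup f Filter.atTop := rfl
    rw [← this]; linarith
  set k : ℕ := ⌈2 / c⌉₊ with hkdef
  have hk0 : 0 < k := by
    rw [hkdef]
    exact Nat.ceil_pos.mpr (by positivity)
  have hkc : 2 ≤ (k : ℝ) * c := by
    have h1 : (2 / c : ℝ) ≤ k := Nat.le_ceil _
    calc (2 : ℝ) = 2 / c * c := by field_simp
    _ ≤ k * c := by nlinarith
  obtain ⟨T, hTsub, hTcard⟩ := hX.exists_subset_card_eq k
  have hTne : T.Nonempty := Finset.card_pos.mp (hTcard ▸ hk0)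
  set M : ℕ := T.max' hTne with hM
  obtain ⟨n, hnM, hnf⟩ := Filter.frequently_atTop.mp hfreq (M + 1)
  have hn0 : (0 : ℝ) < n := by
    have : 1 ≤ n := le_trans (Nat.le_add_left 1 M) hnM
    exact_mod_cast this
  set AF : Finset ℕ := (Finset.Icc 1 n).filter (fun m => m ∈ A) with hAF
  have hcn : c * n < (AF.card : ℝ) := by
    have : c < (AF.card : ℝ) / n := hnf
    calc c * n < ((AF.card : ℝ) / n) * n := by nlinarith
    _ = AF.card := by field_simp
  -- key counting inequality
  have hkey : (Finset.Icc 1 (n + M)).card < (T ×ˢ AF).card := by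
    rw [Finset.card_product, hTcard, Nat.card_Icc]
    have hMn : (M : ℝ) + 1 ≤ n := by exact_mod_cast hnM
    have hcast : ((n + M + 1 - 1 : ℕ) : ℝ) < ((k * AF.card : ℕ) : ℝ) := by
      push_cast
      have hk0' : (0 : ℝ) < k := by exact_mod_cast hk0
      nlinarith [mul_lt_mul_of_pos_left hcn hk0']
    exact_mod_cast hcast
  have hmaps : ∀ p ∈ T ×ˢ AF, p.2 + p.1 ∈ Finset.Icc 1 (n + M) := by
    rintro ⟨x, a⟩ hp
    rw [Finset.mem_product] at hp
    have hx : x ≤ M := T.le_max' x hp.1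
    have ha : a ∈ Finset.Icc 1 n := (Finset.mem_filter.mp hp.2).1
    rw [Finset.mem_Icc] at ha ⊢
    omega
  obtain ⟨⟨x, a⟩, hp, ⟨x', a'⟩, hq, hne, heq⟩ :=
    Finset.exists_ne_map_eq_of_card_lt_of_maps_to hkey hmaps
  rw [Finset.mem_product] at hp hq
  simp only at heq
  have hxX : x ∈ X := hTsub hp.1
  have hx'X : x' ∈ X := hTsub hq.1
  have haA : a ∈ A := (Finset.mem_filter.mp hp.2).2
  have ha'A : a' ∈ A := (Finset.mem_filter.mp hq.2).2
  have hxx' : x ≠ x' := by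
    intro hEq
    apply hne
    subst hEq
    have : a = a' := by omega
    simp [this]
  rcases Nat.lt_or_ge x x' with hlt | hge
  · refine ⟨x' - x, ⟨a', ha'A, a, haA, by omega, by omega⟩, ⟨x, hxX, x', hx'X, hlt, rfl⟩⟩
  · have hlt' : x' < x := lt_of_le_of_ne hge (Ne.symm hxx')
    refine ⟨x - x', ⟨a, haA, a', ha'A, by omega, by omega⟩, ⟨x', hx'X, x, hxX, hlt', rfl⟩⟩
end

section
/- If A ⊆ ℕ is a Δ-set with positive upper asymptotic density, then for every ℓ ∈ ℕ there exist b, c ∈ ℕ with b ∈ A, c ∈ A, and b + ℓ·c ∈ A. -/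
open scoped Classical

/-!
Choose a finite `F ⊆ X` with `|F| · d̄(A) > 1`. For large `N` with `|A ∩ [1,N]| ≈ d̄(A) N`, the
translates `{n ∈ [1,N] : n + ℓx ∈ A}`, `x ∈ F`, each have about `d̄(A) N` elements, so two of them,
for `x < y` in `F`, meet in some `n`. Then `b = n + ℓx ∈ A`, `c = y - x ∈ Δ(X) ⊆ A` and
`b + ℓc = n + ℓy ∈ A`.
-/

open Filter Finset

lemma card_filter_mem_le_card_filter_add_mem_add (A : Set ℕ) (N t : ℕ) :
    #{m ∈ Icc 1 N | m ∈ A} ≤ #{n ∈ Icc 1 N | n + t ∈ A} + t := by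
  calc #{m ∈ Icc 1 N | m ∈ A}
      ≤ #(Icc 1 t ∪ {n ∈ Icc 1 N | n + t ∈ A}.image (· + t)) := by
        refine card_le_card fun m hm => ?_
        simp only [mem_filter, mem_Icc] at hm
        by_cases hmt : m ≤ t
        · exact mem_union_left _ (mem_Icc.2 ⟨hm.1.1, hmt⟩)
        · refine mem_union_right _ (mem_image.2 ⟨m - t, ?_, by omega⟩)
          simp only [mem_filter, mem_Icc, Nat.sub_add_cancel (le_of_not_ge hmt)]
          exact ⟨⟨by omega, by omega⟩, hm.2⟩
    _ ≤ t + #{n ∈ Icc 1 N | n + t ∈ A} := by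
        grw [card_union_le, card_image_le, Nat.card_Icc, Nat.add_sub_cancel]
    _ = _ := add_comm _ _

lemma card_mul_card_filter_mem_le_add_sum {ι : Type*} {A : Set ℕ} (s : Finset ι) (f : ι → ℕ)
    (N : ℕ) (hdisj : (s : Set ι).PairwiseDisjoint fun i => {n ∈ Icc 1 N | n + f i ∈ A}) :
    #s * #{m ∈ Icc 1 N | m ∈ A} ≤ N + ∑ i ∈ s, f i := by
  calc #s * #{m ∈ Icc 1 N | m ∈ A}
      ≤ ∑ i ∈ s, (#{n ∈ Icc 1 N | n + f i ∈ A} + f i) := by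
        rw [← smul_eq_mul, ← sum_const]
        exact sum_le_sum fun i _ => card_filter_mem_le_card_filter_add_mem_add A N (f i)
    _ = #(s.biUnion fun i => {n ∈ Icc 1 N | n + f i ∈ A}) + ∑ i ∈ s, f i := by
        rw [sum_add_distrib, card_biUnion hdisj]
    _ ≤ N + ∑ i ∈ s, f i := by
        grw [biUnion_subset.2 fun i _ => filter_subset _ _, Nat.card_Icc, Nat.add_sub_cancel]

lemma upperDensity_le_of_mul_card_filter_mem_le {A : Set ℕ} {k : ℕ} (hk : 0 < k) (C : ℕ)
    (hcount : ∀ N, k * #{m ∈ Icc 1 N | m ∈ A} ≤ N + C) : upperDensity A ≤ 1 / k := by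
  have hk : (0 : ℝ) < k := by exact_mod_cast hk
  have hbound : ∀ᶠ N : ℕ in atTop,
      (#{m ∈ Icc 1 N | m ∈ A} : ℝ) / N ≤ 1 / k + C / k / N := by
    filter_upwards [eventually_ge_atTop 1] with N hN
    have hcountN : (#{m ∈ Icc 1 N | m ∈ A} : ℝ) ≤ (N + C) / k := by
      rw [le_div_iff₀ hk, mul_comm]
      exact_mod_cast hcount N
    have hN : (0 : ℝ) < N := by exact_mod_cast hN
    calc (#{m ∈ Icc 1 N | m ∈ A} : ℝ) / N ≤ (N + C) / k / N := by gcongr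
      _ = 1 / k + C / k / N := by field_simp
  have hlim : Tendsto (fun N : ℕ => 1 / (k : ℝ) + C / k / N) atTop (nhds (1 / k)) := by
    simpa using tendsto_const_nhds.add (tendsto_const_div_atTop_nhds_zero_nat (C / k : ℝ))
  exact hlim.limsup_eq ▸ limsup_le_limsup hbound
    (isCoboundedUnder_le_of_le atTop fun _ => by positivity) hlim.isBoundedUnder_le

lemma exists_add_mem_and_add_mem_of_one_lt_card_mul_upperDensity {ι : Type*} {A : Set ℕ}
    (s : Finset ι) (f : ι → ℕ) (h : 1 < #s * upperDensity A) :
    ∃ i ∈ s, ∃ j ∈ s, i ≠ j ∧ ∃ n, n + f i ∈ A ∧ n + f j ∈ A := by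
  by_contra! hdisj
  have hs : 0 < #s := by
    by_contra! hs
    rw [Nat.le_zero.1 hs, Nat.cast_zero, zero_mul] at h
    exact zero_le_one.not_gt h
  have hle := upperDensity_le_of_mul_card_filter_mem_le hs (∑ i ∈ s, f i) fun N =>
    card_mul_card_filter_mem_le_add_sum s f N fun i hi j hj hij =>
      disjoint_left.2 fun n hni hnj =>
        hdisj i hi j hj hij n (mem_filter.1 hni).2 (mem_filter.1 hnj).2
  rw [le_div_iff₀ (by exact_mod_cast hs), mul_comm] at hle
  exact hle.not_gt h

theorem stmt4 (A : Set ℕ) (hA : IsDeltaSet A) (hd : 0 < upperDensity A) (ℓ : ℕ) :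
    ∃ b c : ℕ, b ∈ A ∧ c ∈ A ∧ b + ℓ * c ∈ A := by
  obtain ⟨X, hXinf, hXA⟩ := hA
  obtain ⟨F, hFX, hF⟩ := hXinf.exists_subset_card_eq (⌊1 / upperDensity A⌋₊ + 1)
  have hFd : 1 < #F * upperDensity A := by
    rw [hF, ← div_lt_iff₀ hd]
    exact_mod_cast Nat.lt_floor_add_one _
  obtain ⟨x, hx, y, hy, hxy, n, hnx, hny⟩ :=
    exists_add_mem_and_add_mem_of_one_lt_card_mul_upperDensity F (ℓ * ·) hFd
  wlog hlt : x < y generalizing x y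
  · exact this y hy x hx hxy.symm hny hnx (hxy.symm.lt_of_le (not_lt.1 hlt))
  refine ⟨n + ℓ * x, y - x, hnx, hXA ⟨x, hFX hx, y, hFX hy, hlt, rfl⟩, ?_⟩
  rwa [add_assoc, ← mul_add, Nat.add_sub_cancel' hlt.le]
end

section
/- The family F consisting of all sets A ⊆ ℕ with lower asymptotic density 1, together with all sets A ⊆ ℕ such that A ∩ Δ(X) ≠ ∅ for every infinite X ⊆ ℕ, has the finite intersection property. -/
/-!
Both kinds of sets in the family are closed under finite intersections. For sets of lower
density one this is the inequality `d(A ∩ B) ≥ d(A) + d(B) - 1` on initial segments. For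
Δ*-sets it is Ramsey's theorem for pairs: colouring `x < y` by whether `y - x ∈ A` gives an
infinite `Y ⊆ X` with `Δ(Y) ⊆ A`, and then `B` meets `Δ(Y) ⊆ Δ(X)`. Finally, a set of lower
density one is thick, hence contains `Δ(X)` for some infinite `X`, which the intersection of the
Δ*-members then meets.
-/

open scoped Classical

open Filter Topology Finset

noncomputable def countUpTo (A : Set ℕ) (n : ℕ) : ℕ := #((Icc 1 n).filter (· ∈ A))

noncomputable def densityRatio (A : Set ℕ) (n : ℕ) : ℝ := countUpTo A n / n

lemma countUpTo_le (A : Set ℕ) (n : ℕ) : countUpTo A n ≤ n :=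
  (card_filter_le _ _).trans (Nat.card_Icc 1 n).le

lemma countUpTo_add (A : Set ℕ) (a b : ℕ) :
    countUpTo A (a + b) = countUpTo A a + #((Ioc a (a + b)).filter (· ∈ A)) := by
  have hIcc (n : ℕ) : Icc 1 n = Ioc 0 n := Icc_add_one_left_eq_Ioc 0 n
  rw [countUpTo, countUpTo, hIcc, hIcc, ← Ioc_union_Ioc_eq_Ioc a.zero_le (a.le_add_right b),
    filter_union, card_union_of_disjoint
      (disjoint_filter_filter (Ioc_disjoint_Ioc_of_le le_rfl))]

lemma countUpTo_inter (A B : Set ℕ) (n : ℕ) :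
    countUpTo A n + countUpTo B n ≤ countUpTo (A ∩ B) n + n := by
  have hunion : #((Icc 1 n).filter (· ∈ A) ∪ (Icc 1 n).filter (· ∈ B)) ≤ n :=
    (card_le_card (union_subset (filter_subset _ _) (filter_subset _ _))).trans
      (Nat.card_Icc 1 n).le
  have hinter :
      #((Icc 1 n).filter (· ∈ A) ∩ (Icc 1 n).filter (· ∈ B)) = countUpTo (A ∩ B) n := by
    unfold countUpTo
    congr 1
    ext
    simp only [mem_inter, mem_filter, Set.mem_inter_iff]
    tauto
  have := card_union_add_card_inter ((Icc 1 n).filter (· ∈ A)) ((Icc 1 n).filter (· ∈ B))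
  rw [hinter] at this
  change #((Icc 1 n).filter (· ∈ A)) + #((Icc 1 n).filter (· ∈ B)) ≤ _
  omega

lemma densityRatio_nonneg (A : Set ℕ) (n : ℕ) : 0 ≤ densityRatio A n := by
  unfold densityRatio; positivity

lemma densityRatio_le_one (A : Set ℕ) (n : ℕ) : densityRatio A n ≤ 1 :=
  div_le_one_of_le₀ (by exact_mod_cast countUpTo_le A n) n.cast_nonneg

lemma densityRatio_add_densityRatio_le (A B : Set ℕ) (n : ℕ) :
    densityRatio A n + densityRatio B n ≤ densityRatio (A ∩ B) n + 1 := by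
  rcases n.eq_zero_or_pos with rfl | hn
  · simp [densityRatio]
  · have hn' : (0 : ℝ) < n := by exact_mod_cast hn
    rw [densityRatio, densityRatio, densityRatio, ← div_self hn'.ne', ← add_div, ← add_div]
    exact div_le_div_of_nonneg_right (by exact_mod_cast countUpTo_inter A B n) hn'.le

lemma lowerDensity_eq_one_iff (A : Set ℕ) :
    lowerDensity A = 1 ↔ Tendsto (densityRatio A) atTop (𝓝 1) := by
  have hle : ∀ᶠ n in atTop, densityRatio A n ≤ 1 := .of_forall (densityRatio_le_one A)
  have hge : IsBoundedUnder (· ≥ ·) atTop (densityRatio A) :=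
    isBoundedUnder_of_eventually_ge (.of_forall (densityRatio_nonneg A))
  exact ⟨fun h => tendsto_of_le_liminf_of_limsup_le h.ge
    (limsup_le_of_le hge.isCoboundedUnder_le hle) (isBoundedUnder_of_eventually_le hle) hge,
    Tendsto.liminf_eq⟩

lemma lowerDensity_univ : lowerDensity Set.univ = 1 := by
  rw [lowerDensity_eq_one_iff]
  refine tendsto_const_nhds.congr' ((eventually_ne_atTop 0).mono fun n hn => ?_)
  have hcount : countUpTo Set.univ n = n := by simp [countUpTo]
  simp [densityRatio, hcount, hn]

lemma lowerDensity_inter_eq_one {A B : Set ℕ} (hA : lowerDensity A = 1)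
    (hB : lowerDensity B = 1) :    lowerDensity (A ∩ B) = 1 := by
  rw [lowerDensity_eq_one_iff] at *
  have hlower : Tendsto (fun n => densityRatio A n + densityRatio B n - 1) atTop (𝓝 1) := by
    simpa using (hA.add hB).sub_const 1
  exact tendsto_of_tendsto_of_tendsto_of_le_of_le hlower tendsto_const_nhds
    (fun n => by linarith [densityRatio_add_densityRatio_le A B n]) (densityRatio_le_one _)

lemma thick_of_lowerDensity_eq_one {D : Set ℕ} (hD : lowerDensity D = 1) : Thick D := by
  by_contra hthick
  obtain ⟨k, hgap⟩ : ∃ k, ∀ a, ∃ i < k, a + i ∉ D := by simpa [Thick] using hthick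
  have hk : 0 < k := by obtain ⟨i, hi, -⟩ := hgap 0; omega
  have hblock (a : ℕ) : #((Ioc a (a + k)).filter (· ∈ D)) < k := by
    obtain ⟨i, hi, hiD⟩ := hgap (a + 1)
    have hmem : a + 1 + i ∈ Ioc a (a + k) := mem_Ioc.2 ⟨by omega, by omega⟩
    simpa using (card_filter_le _ _).lt_of_ne fun h => hiD (card_filter_eq_iff.1 h _ hmem)
  have hcount (m : ℕ) : countUpTo D (m * k) + m ≤ m * k := by
    induction m with
    | zero => simp [countUpTo]
    | succ m ih => rw [Nat.succ_mul, countUpTo_add]; linarith [hblock (m * k)]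
  have hratio (m : ℕ) : densityRatio D (m * k) ≤ 1 - 1 / k := by
    have hk' : (1 : ℝ) ≤ k := by exact_mod_cast hk
    rcases m.eq_zero_or_pos with rfl | hm
    · simpa [densityRatio] using div_le_one_of_le₀ hk' (by positivity)
    · have hm' : (0 : ℝ) < m := by exact_mod_cast hm
      have hcount' : (countUpTo D (m * k) : ℝ) + m ≤ m * k := by exact_mod_cast hcount m
      rw [densityRatio, div_le_iff₀ (by positivity), Nat.cast_mul]
      field_simp
      linarith
  have hlim : Tendsto (fun m => densityRatio D (m * k)) atTop (𝓝 1) :=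
    ((lowerDensity_eq_one_iff D).1 hD).comp (tendsto_id.atTop_mul_const' hk)
  have hk_inv : (0 : ℝ) < 1 / k := by positivity
  linarith [le_of_tendsto' hlim hratio]

lemma Thick.isDeltaSet {D : Set ℕ} (hD : Thick D) : IsDeltaSet D := by
  choose start hstart using hD
  -- for `y ≤ x n`, `x (n + 1) - y` lies in the block of length `x n + 2` at `start (x n + 2)`
  let x : ℕ → ℕ := fun n => n.rec 0 fun _ xn => start (xn + 2) + xn + 1
  have hsucc (n : ℕ) : x (n + 1) = start (x n + 2) + x n + 1 := rfl
  have hmono : StrictMono x := strictMono_nat_of_lt_succ fun n => by rw [hsucc]; omega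
  have hdiff (n y : ℕ) (hy : y ≤ x n) : x (n + 1) - y ∈ D := by
    have hx : x (n + 1) - y = start (x n + 2) + (x n + 1 - y) := by rw [hsucc]; omega
    exact hx ▸ hstart _ _ (by omega)
  refine ⟨Set.range x, Set.infinite_range_of_injective hmono.injective, ?_⟩
  rintro d ⟨_, ⟨n, rfl⟩, _, ⟨m, rfl⟩, hlt, rfl⟩
  have hnm : n < m := hmono.lt_iff_lt.1 hlt
  obtain ⟨m, rfl⟩ := Nat.exists_eq_add_one_of_ne_zero (n.zero_le.trans_lt hnm).ne'
  exact hdiff m (x n) (hmono.monotone (by omega))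

lemma Set.Infinite.exists_infinite_subset_forall_or_forall_not {α : Type*} {S : Set α}
    (hS : S.Infinite) (p : α → Prop) :
    ∃ T ⊆ S, T.Infinite ∧ ((∀ y ∈ T, p y) ∨ ∀ y ∈ T, ¬p y) := by
  by_cases h : (S ∩ {y | p y}).Infinite
  · exact ⟨_, Set.inter_subset_left, h, .inl fun y hy => hy.2⟩
  · exact ⟨_, Set.sdiff_subset, hS.sdiff (Set.not_infinite.1 h),
      .inr fun y hy hpy => hy.2 ⟨hy.1, hpy⟩⟩

lemma exists_strictMono_endHomogeneous (P : ℕ → ℕ → Prop) {X : Set ℕ} (hX : X.Infinite) :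
    ∃ x : ℕ → ℕ, StrictMono x ∧ (∀ n, x n ∈ X) ∧
      ∀ n m, n < m → (P (x n) (x m) ↔ P (x n) (x (n + 1))) := by
  have hstep (S : {S : Set ℕ // S.Infinite}) :
      ∃ T : {T : Set ℕ // T.Infinite}, T.1 ⊆ S.1 ∧ (∀ y ∈ T.1, sInf S.1 < y) ∧
        ((∀ y ∈ T.1, P (sInf S.1) y) ∨ ∀ y ∈ T.1, ¬P (sInf S.1) y) := by
    obtain ⟨T, hTS, hT, hhom⟩ :=
      (S.2.sdiff (Set.finite_Iic (sInf S.1))).exists_infinite_subset_forall_or_forall_not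
        (P (sInf S.1))
    exact ⟨⟨T, hT⟩, hTS.trans Set.sdiff_subset, fun y hy => not_le.1 (hTS hy).2, hhom⟩
  choose next hsub hgt hhom using hstep
  let S : ℕ → {S : Set ℕ // S.Infinite} := fun n => next^[n] ⟨X, hX⟩
  have hSsucc (n : ℕ) : S (n + 1) = next (S n) := Function.iterate_succ_apply' _ _ _
  have hanti : Antitone fun n => (S n).1 :=
    antitone_nat_of_succ_le fun n => by rw [hSsucc]; exact hsub _
  have hmem (n : ℕ) : sInf (S n).1 ∈ (S n).1 := Nat.sInf_mem (S n).2.nonempty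
  have hahead {n m : ℕ} (h : n < m) : sInf (S m).1 ∈ (next (S n)).1 :=
    hSsucc n ▸ hanti h (hmem m)
  refine ⟨fun n => sInf (S n).1, fun n m h => hgt _ _ (hahead h),
    fun n => hanti n.zero_le (hmem n), fun n m h => ?_⟩
  rcases hhom (S n) with hP | hP
  · exact iff_of_true (hP _ (hahead h)) (hP _ (hahead n.lt_succ_self))
  · exact iff_of_false (hP _ (hahead h)) (hP _ (hahead n.lt_succ_self))

lemma exists_infinite_homogeneous_subset (P : ℕ → ℕ → Prop) {X : Set ℕ}
    (hX : X.Infinite) :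
    ∃ Y ⊆ X, Y.Infinite ∧
      ((∀ x ∈ Y, ∀ y ∈ Y, x < y → P x y) ∨ ∀ x ∈ Y, ∀ y ∈ Y, x < y → ¬P x y) := by
  obtain ⟨x, hmono, hxX, hhom⟩ := exists_strictMono_endHomogeneous P hX
  obtain ⟨I, -, hI, hIhom⟩ :=
    Set.infinite_univ.exists_infinite_subset_forall_or_forall_not
      fun n => P (x n) (x (n + 1))
  refine ⟨x '' I, Set.image_subset_iff.2 fun n _ => hxX n,
    hI.image hmono.injective.injOn, ?_⟩
  rcases hIhom with hP | hP
  · left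
    rintro _ ⟨n, hn, rfl⟩ _ ⟨m, -, rfl⟩ hlt
    exact (hhom n m (hmono.lt_iff_lt.1 hlt)).2 (hP n hn)
  · right
    rintro _ ⟨n, hn, rfl⟩ _ ⟨m, -, rfl⟩ hlt
    exact mt (hhom n m (hmono.lt_iff_lt.1 hlt)).1 (hP n hn)

def IsDeltaStar (A : Set ℕ) : Prop := ∀ X : Set ℕ, X.Infinite → (A ∩ diffSet X).Nonempty

lemma diffSet_mono {X Y : Set ℕ} (h : X ⊆ Y) : diffSet X ⊆ diffSet Y := by
  rintro d ⟨x, hx, x', hx', hlt, rfl⟩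
  exact ⟨x, h hx, x', h hx', hlt, rfl⟩

lemma diffSet_nonempty {X : Set ℕ} (hX : X.Infinite) : (diffSet X).Nonempty := by
  obtain ⟨x, hx⟩ := hX.nonempty
  obtain ⟨y, hy, hxy⟩ := hX.exists_gt x
  exact ⟨y - x, x, hx, y, hy, hxy, rfl⟩

lemma isDeltaStar_univ : IsDeltaStar Set.univ := fun _ hX => by
  simpa using diffSet_nonempty hX

lemma IsDeltaStar.exists_infinite_subset_diffSet_subset {A : Set ℕ} (hA : IsDeltaStar A)
    {X : Set ℕ} (hX : X.Infinite) : ∃ Y ⊆ X, Y.Infinite ∧ diffSet Y ⊆ A := by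
  obtain ⟨Y, hYX, hY, hP | hP⟩ :=
    exists_infinite_homogeneous_subset (fun x y => y - x ∈ A) hX
  · exact ⟨Y, hYX, hY, by rintro _ ⟨x, hx, y, hy, hxy, rfl⟩; exact hP x hx y hy hxy⟩
  · obtain ⟨_, hdA, x, hx, y, hy, hxy, rfl⟩ := hA Y hY
    exact absurd hdA (hP x hx y hy hxy)

lemma IsDeltaStar.inter {A B : Set ℕ} (hA : IsDeltaStar A) (hB : IsDeltaStar B) :
    IsDeltaStar (A ∩ B) := fun X hX => by
  obtain ⟨Y, hYX, hY, hYA⟩ := hA.exists_infinite_subset_diffSet_subset hX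
  obtain ⟨d, hdB, hdY⟩ := hB Y hY
  exact ⟨d, ⟨hYA hdY, hdB⟩, diffSet_mono hYX hdY⟩

lemma Finset.exists_subset_forall_of_inter_closed {α : Type*} {p : Set α → Prop}
    (huniv : p Set.univ) (hinter : ∀ A B, p A → p B → p (A ∩ B)) (G : Finset (Set α)) :
    ∃ D, p D ∧ ∀ A ∈ G, p A → D ⊆ A :=
  ⟨_, inf_induction (p := p) huniv (fun _ h₁ _ h₂ => hinter _ _ h₁ h₂)
    fun _ hA => (mem_filter.1 hA).2, fun _ hA h => inf_le (f := id) (mem_filter.2 ⟨hA, h⟩)⟩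

theorem stmt6 :
    ∀ G : Finset (Set ℕ),
      (↑G : Set (Set ℕ)) ⊆
        ({A | lowerDensity A = 1} ∪
         {A | ∀ X : Set ℕ, X.Infinite → (A ∩ diffSet X).Nonempty}) →
      (⋂₀ (↑G : Set (Set ℕ))).Nonempty := by
  intro G hG
  obtain ⟨D, hD, hDG⟩ :=
    G.exists_subset_forall_of_inter_closed (p := (lowerDensity · = 1)) lowerDensity_univ
      fun _ _ => lowerDensity_inter_eq_one
  obtain ⟨E, hE, hEG⟩ :=
    G.exists_subset_forall_of_inter_closed (p := IsDeltaStar) isDeltaStar_univ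
      fun _ _ => IsDeltaStar.inter
  obtain ⟨X, hX, hXD⟩ := (thick_of_lowerDensity_eq_one hD).isDeltaSet
  obtain ⟨d, hdE, hdX⟩ := hE X hX
  refine ⟨d, fun A hA => ?_⟩
  rcases hG hA with hA' | hA'
  · exact hDG A hA hA' (hXD hdX)
  · exact hEG A hA hA' hdE
end

section
/- Let f : ℕ × ℕ → ℕ be f(n,m) = 2^n · m, and let U be an ultrafilter on ℕ such that every X ∈ U contains, for every ℓ, a triple {b, c, b + ℓc}. Then every A in the image ultrafilter f_*(U ⊗ U) contains a triple {x, y, 2^x · y}. -/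
open scoped Classical

theorem stmt8 (U : Ultrafilter ℕ)
    (hU : ∀ X ∈ U, ∀ ℓ : ℕ, ∃ b c : ℕ, b ∈ X ∧ c ∈ X ∧ b + ℓ * c ∈ X)
    (A : Set ℕ)
    (hA : {n : ℕ | {m : ℕ | 2 ^ n * m ∈ A} ∈ U} ∈ U) :
    ∃ x y : ℕ, x ∈ A ∧ y ∈ A ∧ 2 ^ x * y ∈ A := by
  set B : Set ℕ := {n : ℕ | {m : ℕ | 2 ^ n * m ∈ A} ∈ U} with hB
  obtain ⟨n₁, hn₁⟩ := Filter.nonempty_of_mem hA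
  have hAn₁ : {m : ℕ | 2 ^ n₁ * m ∈ A} ∈ U := hn₁
  have hX : B ∩ {m : ℕ | 2 ^ n₁ * m ∈ A} ∈ U := Filter.inter_mem hA hAn₁
  obtain ⟨b, c, hb, hc, hbc⟩ := hU _ hX (2 ^ n₁)
  have hm : {m : ℕ | 2 ^ b * m ∈ A} ∩ {m : ℕ | 2 ^ (b + 2 ^ n₁ * c) * m ∈ A} ∈ U :=
    Filter.inter_mem hb.1 hbc.1
  obtain ⟨m₂, hm₂⟩ := Filter.nonempty_of_mem hm
  refine ⟨2 ^ n₁ * c, 2 ^ b * m₂, hc.2, hm₂.1, ?_⟩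
  have := hm₂.2
  simp only [Set.mem_setOf_eq] at this
  have heq : 2 ^ (2 ^ n₁ * c) * (2 ^ b * m₂) = 2 ^ (b + 2 ^ n₁ * c) * m₂ := by ring
  rw [heq]; exact this
end

section
/- For every finite coloring ℕ = C₁ ∪ … ∪ C_r there exist an index i and natural numbers a, b ≥ 2 with {a, b, b^a} ⊆ C_i. -/
open scoped Classical

/-!
Colour `n` by the colour of `2 ^ n`: it suffices to find `x, y ≥ 1` with `x`, `y`, `y * 2 ^ x` of
one colour, and we suppose there are none. Call a colour rich if it contains all differences of
arbitrarily large finite sets. If all differences of `Y` have colour `c`, then among the exponents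
`e` with `u * 2 ^ e` of colour `c` the sums `e + y` (`y ∈ Y`) are pairwise distinct, so along every
ray `u * 2 ^ e` the rich colours occupy only a small proportion of each long window of exponents.
By averaging over such windows one can add elements one at a time to a finite set all of whose
differences have poor colours, descending to coarser powers of `2` at each step. Ramsey's theorem
turns a large such set into a large set all of whose differences have one poor colour, which is
impossible.
-/

open Finset

section Ramsey

variable {α β : Type*} [Fintype α] [LinearOrder β]

def PairMono (χ : β → β → α) (c : α) (W : Finset β) : Prop :=
  ∀ a ∈ W, ∀ b ∈ W, a < b → χ a b = c

theorem ramsey_pairs_step {f : α → ℕ} {M : ℕ}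
    (hM : ∀ c (χ : β → β → α) (Y : Finset β), M ≤ #Y →
      ∃ c', ∃ W ⊆ Y, Function.update f c (f c - 1) c' ≤ #W ∧ PairMono χ c' W)
    (χ : β → β → α) (Y : Finset β) (hY : Fintype.card α * M + 1 ≤ #Y) :
    ∃ c, ∃ W ⊆ Y, f c ≤ #W ∧ PairMono χ c W := by
  have hYne : Y.Nonempty := card_pos.1 (by omega)
  set y₀ := Y.min' hYne
  obtain ⟨c, -, hfiber⟩ := exists_le_card_fiber_of_mul_le_card_of_maps_to
    (f := χ y₀) (s := Y.erase y₀) (t := univ) (n := M) (fun _ _ => mem_univ _)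
    ⟨χ y₀ y₀, mem_univ _⟩ (by rw [card_erase_of_mem (Y.min'_mem hYne), card_univ]; omega)
  obtain ⟨c', W, hWsub, hWcard, hWmono⟩ := hM c χ _ hfiber
  have hWY : W ⊆ Y := hWsub.trans ((filter_subset _ _).trans (erase_subset _ _))
  by_cases hcc : c' = c
  · subst hcc
    have hy₀W : y₀ ∉ W := fun h => by simpa using (mem_filter.1 (hWsub h)).1
    refine ⟨c', insert y₀ W, insert_subset (Y.min'_mem hYne) hWY, ?_, ?_⟩
    · rw [card_insert_of_notMem hy₀W]
      rw [Function.update_self] at hWcard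
      omega
    · intro a ha b hb hab
      rw [mem_insert] at ha hb
      rcases ha with rfl | ha
      · rcases hb with rfl | hb
        · exact absurd hab (lt_irrefl _)
        · exact (mem_filter.1 (hWsub hb)).2
      · rcases hb with rfl | hb
        · exact absurd hab (not_lt.2 (Y.min'_le a (hWY ha)))
        · exact hWmono a ha b hb hab
  · exact ⟨c', W, hWY, by rwa [Function.update_of_ne hcc] at hWcard, hWmono⟩

theorem ramsey_pairs (f : α → ℕ) :
    ∃ N, ∀ (χ : β → β → α) (Y : Finset β), N ≤ #Y →
      ∃ c, ∃ W ⊆ Y, f c ≤ #W ∧ PairMono χ c W := by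
  induction hn : ∑ c, f c using Nat.strong_induction_on generalizing f with
  | _ n ih =>
  by_cases h0 : ∃ c, f c = 0
  · obtain ⟨c, hc⟩ := h0
    exact ⟨0, fun χ Y _ => ⟨c, ∅, empty_subset Y, by simp [hc], by simp [PairMono]⟩⟩
  push Not at h0
  have hlower (c : α) : ∃ N, ∀ (χ : β → β → α) (Y : Finset β), N ≤ #Y →
      ∃ c', ∃ W ⊆ Y, Function.update f c (f c - 1) c' ≤ #W ∧ PairMono χ c' W := by
    refine ih _ ?_ _ rfl
    have hupd := sum_update_of_mem (mem_univ c) f (f c - 1)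
    have hsplit := add_sum_erase univ f (mem_univ c)
    rw [← sdiff_singleton_eq_erase] at hsplit
    have := Nat.pos_of_ne_zero (h0 c)
    omega
  choose Nc hNc using hlower
  exact ⟨_, ramsey_pairs_step fun c χ Y hY => hNc c χ Y ((le_sup (f := Nc) (mem_univ c)).trans hY)⟩

end Ramsey

theorem exists_forall_not_of_card_mul_lt {ι : Type*} (Q : ℕ → ℕ → Prop) (W : Finset ℕ)
    (s : Finset ι) (t : ι → ℕ → ℕ) {B K D M : ℕ}
    (hQ : ∀ m, 0 < m → #{e ∈ W | Q e m} * K ≤ B) (ht : ∀ i ∈ s, ∀ e ∈ W, t i e ≤ D)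
    (hcount : #s * ((M + D) * B) < #W * M * K) :
    ∃ e ∈ W, ∃ m, 0 < m ∧ ∀ i ∈ s, ¬ Q e (m + t i e) := by
  by_contra! hbad
  set hits := {p ∈ W ×ˢ Icc 1 (M + D) | Q p.1 p.2}
  have hhits : #hits * K ≤ (M + D) * B := by
    rw [card_filter, sum_product_right]
    simp only [← card_filter]
    rw [sum_mul]
    calc _ ≤ ∑ _m ∈ Icc 1 (M + D), B := sum_le_sum fun m hm => hQ m (mem_Icc.1 hm).1
      _ = (M + D) * B := by simp
  have hshift : ∀ i ∈ s, #{p ∈ W ×ˢ Icc 1 M | Q p.1 (p.2 + t i p.1)} ≤ #hits := by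
    intro i hi
    refine card_le_card_of_injOn (fun p => (p.1, p.2 + t i p.1)) ?_ ?_
    · intro p hp
      simp only [hits, coe_filter, mem_product, mem_Icc, Set.mem_ofPred_eq] at hp ⊢
      have := ht i hi p.1 hp.1.1
      exact ⟨⟨hp.1.1, by omega, by omega⟩, hp.2⟩
    · intro p _ q _ h
      simp only [Prod.mk.injEq] at h
      exact Prod.ext h.1 (by rw [h.1] at h; omega)
  have hcover : W ×ˢ Icc 1 M ⊆ s.biUnion fun i => {p ∈ W ×ˢ Icc 1 M | Q p.1 (p.2 + t i p.1)} := by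
    intro p hp
    obtain ⟨i, hi, hQi⟩ := hbad p.1 (mem_product.1 hp).1 p.2 (mem_Icc.1 (mem_product.1 hp).2).1
    exact mem_biUnion.2 ⟨i, hi, mem_filter.2 ⟨hp, hQi⟩⟩
  have hgrid : #W * M ≤ #s * #hits := calc
    #W * M = #(W ×ˢ Icc 1 M) := by simp
    _ ≤ ∑ i ∈ s, #{p ∈ W ×ˢ Icc 1 M | Q p.1 (p.2 + t i p.1)} :=
      (card_le_card hcover).trans card_biUnion_le
    _ ≤ ∑ _i ∈ s, #hits := sum_le_sum hshift
    _ = #s * #hits := by simp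
  have := Nat.mul_le_mul_right K hgrid
  have := Nat.mul_le_mul_left #s hhits
  nlinarith

section ExpTriple

variable {α : Type*} {g : ℕ → α}

def DiffMono (g : ℕ → α) (c : α) (Y : Finset ℕ) : Prop := PairMono (fun a b => g (b - a)) c Y

theorem card_exponents_mul_card_le
    (hg : ∀ x y, 0 < x → 0 < y → g x = g y → g (y * 2 ^ x) ≠ g y)
    {c : α} {Y : Finset ℕ} (hY : DiffMono g c Y) {T : ℕ} (hYT : Y ⊆ range T)
    {u : ℕ} (hu : 0 < u) (A L : ℕ) :
    #{e ∈ Ico A (A + L) | g (u * 2 ^ e) = c} * #Y ≤ L + T := by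
  set F := {e ∈ Ico A (A + L) | g (u * 2 ^ e) = c}
  -- `e + y = e' + y'` with `y < y'` would make `y' - y`, `u * 2 ^ e'`, `u * 2 ^ e` a triple
  have hsum : ∀ p ∈ F ×ˢ Y, ∀ q ∈ F ×ˢ Y, p.1 + p.2 = q.1 + q.2 → ¬ p.2 < q.2 := by
    intro p hp q hq h hlt
    simp only [F, mem_product, mem_filter] at hp hq
    have hpow : u * 2 ^ q.1 * 2 ^ (q.2 - p.2) = u * 2 ^ p.1 := by
      rw [mul_assoc, ← pow_add]; congr 2; omega
    exact hg (q.2 - p.2) (u * 2 ^ q.1) (by omega) (by positivity)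
      ((hY p.2 hp.2 q.2 hq.2 hlt).trans hq.1.2.symm) (by rw [hpow, hp.1.2, hq.1.2])
  have hinj : Set.InjOn (fun p : ℕ × ℕ => p.1 + p.2) (F ×ˢ Y : Finset (ℕ × ℕ)) := by
    intro p hp q hq h
    rcases lt_trichotomy p.2 q.2 with hlt | heq | hgt
    · exact absurd hlt (hsum p hp q hq h)
    · exact Prod.ext (by simp only at h; omega) heq
    · exact absurd hgt (hsum q hq p hp h.symm)
  have hmaps : Set.MapsTo (fun p : ℕ × ℕ => p.1 + p.2) (F ×ˢ Y : Finset (ℕ × ℕ))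
      (Ico A (A + L + T) : Finset ℕ) := by
    intro p hp
    simp only [F, coe_product, Set.mem_prod, mem_coe, mem_filter, mem_Ico] at hp ⊢
    have := mem_range.1 (hYT hp.2)
    omega
  calc #F * #Y = #(F ×ˢ Y) := (card_product F Y).symm
    _ ≤ #(Ico A (A + L + T)) := card_le_card_of_injOn _ hmaps hinj
    _ = L + T := by rw [Nat.card_Ico]; omega

theorem card_richExponents_mul_le [Fintype α]
    (hg : ∀ x y, 0 < x → 0 < y → g x = g y → g (y * 2 ^ x) ≠ g y)
    {R : Set α} {K T : ℕ} (hR : ∀ c ∈ R, ∃ Y, DiffMono g c Y ∧ K ≤ #Y ∧ Y ⊆ range T)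
    {u : ℕ} (hu : 0 < u) (A L : ℕ) :
    #{e ∈ Ico A (A + L) | g (u * 2 ^ e) ∈ R} * K ≤ Fintype.card α * (L + T) := by
  rw [card_eq_sum_card_fiberwise (f := fun e => g (u * 2 ^ e)) (t := univ)
    (fun _ _ => mem_univ _), sum_mul]
  calc _ ≤ ∑ _c : α, (L + T) := sum_le_sum fun c _ => ?_
    _ = Fintype.card α * (L + T) := by simp
  rw [filter_filter]
  by_cases hc : c ∈ R
  · obtain ⟨Y, hY, hKY, hYT⟩ := hR c hc
    calc _ ≤ #{e ∈ Ico A (A + L) | g (u * 2 ^ e) = c} * #Y :=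
          Nat.mul_le_mul (card_le_card fun e he => by
            simp only [mem_filter] at he ⊢; exact ⟨he.1, he.2.2⟩) hKY
      _ ≤ L + T := card_exponents_mul_card_le hg hY hYT hu A L
  · have hempty : {e ∈ Ico A (A + L) | g (u * 2 ^ e) ∈ R ∧ g (u * 2 ^ e) = c} = ∅ :=
      filter_eq_empty_iff.2 fun e _ he => hc (he.2 ▸ he.1)
    simp [hempty]

end ExpTriple

section Construction

variable {α : Type*} {g : ℕ → α} {R : Set α} {Λ K B : ℕ}

def DiffAvoids (g : ℕ → α) (R : Set α) (P : Finset ℕ) : Prop :=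
  ∀ a ∈ P, ∀ b ∈ P, a < b → g (b - a) ∉ R

theorem DiffAvoids.insert {P : Finset ℕ} (hP : DiffAvoids g R P) {z : ℕ}
    (hz : ∀ p ∈ P, p < z ∧ g (z - p) ∉ R) : DiffAvoids g R (insert z P) := by
  intro a ha b hb hab
  rw [mem_insert] at ha hb
  rcases hb with rfl | hb
  · rcases ha with rfl | ha
    · exact absurd hab (lt_irrefl _)
    · exact (hz a ha).2
  · rcases ha with rfl | ha
    · exact absurd hab (hz b hb).1.not_gt
    · exact hP a ha b hb hab

theorem exists_extension_diffAvoids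
    (hR : ∀ u, 0 < u → ∀ A, #{e ∈ Ico A (A + Λ) | g (u * 2 ^ e) ∈ R} * K ≤ B)
    {P : Finset ℕ} {E : ℕ} (hPdvd : ∀ p ∈ P, 2 ^ E ∣ p) (hΛE : Λ ≤ E)
    (hcount : 2 * #P * B < Λ * K) :
    ∃ z, 2 ^ (E - Λ) ∣ z ∧ ∀ p ∈ P, p < z ∧ g (z - p) ∉ R := by
  set S := ∑ p ∈ P, p
  -- the new element is `z = m * 2 ^ e + S`, so that `z - p = (m + (S - p) / 2 ^ e) * 2 ^ e`
  obtain ⟨e, he, m, hm, hgood⟩ := exists_forall_not_of_card_mul_lt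
    (fun e n => g (n * 2 ^ e) ∈ R) (Ico (E - Λ) E) P (fun p e => (S - p) / 2 ^ e)
    (D := S) (M := S + 1)
    (fun m hm => by simpa only [Nat.sub_add_cancel hΛE] using hR m hm (E - Λ))
    (fun p _ e _ => (Nat.div_le_self _ _).trans (Nat.sub_le _ _))
    (by
      rw [Nat.card_Ico, Nat.sub_sub_self hΛE]
      have := Nat.mul_lt_mul_of_pos_left hcount (Nat.succ_pos S)
      nlinarith)
  obtain ⟨he₁, he₂⟩ := mem_Ico.1 he
  have hdvd : ∀ p ∈ P, 2 ^ e ∣ p := fun p hp => (pow_dvd_pow 2 he₂.le).trans (hPdvd p hp)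
  have hS : 2 ^ e ∣ S := dvd_sum hdvd
  have hpS : ∀ p ∈ P, p ≤ S := fun p hp => single_le_sum (f := id) (fun _ _ => Nat.zero_le _) hp
  have hpos : 0 < m * 2 ^ e := by positivity
  refine ⟨m * 2 ^ e + S, (pow_dvd_pow 2 he₁).trans (dvd_add (dvd_mul_left _ _) hS),
    fun p hp => ⟨by linarith [hpS p hp], ?_⟩⟩
  have hz : m * 2 ^ e + S - p = (m + (S - p) / 2 ^ e) * 2 ^ e := by
    rw [add_mul, Nat.div_mul_cancel (Nat.dvd_sub hS (hdvd p hp)), Nat.add_sub_assoc (hpS p hp)]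
  rw [hz]
  exact hgood p hp

theorem exists_card_eq_diffAvoids
    (hR : ∀ u, 0 < u → ∀ A, #{e ∈ Ico A (A + Λ) | g (u * 2 ^ e) ∈ R} * K ≤ B)
    {k : ℕ} (hk : 2 * k * B < Λ * K) :
    ∃ P : Finset ℕ, #P = k + 1 ∧ DiffAvoids g R P := by
  suffices ∀ j ≤ k, ∃ P : Finset ℕ, #P = j + 1 ∧ DiffAvoids g R P ∧
      ∀ p ∈ P, 2 ^ ((k - j) * Λ) ∣ p by
    obtain ⟨P, hP, hPR, -⟩ := this k le_rfl
    exact ⟨P, hP, hPR⟩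
  intro j
  induction j with
  | zero => exact fun _ => ⟨{0}, rfl, by simp [DiffAvoids], by simp⟩
  | succ j ih =>
    intro hj
    obtain ⟨P, hP, hPR, hPdvd⟩ := ih (by omega)
    have hstep : (k - j) * Λ - Λ = (k - (j + 1)) * Λ := by
      rw [← Nat.sub_one_mul, Nat.sub_sub]
    obtain ⟨z, hzdvd, hz⟩ := exists_extension_diffAvoids hR hPdvd
      (Nat.le_mul_of_pos_left Λ (by omega))
      (by rw [hP]; exact lt_of_le_of_lt (by gcongr) hk)
    have hzP : z ∉ P := fun h => lt_irrefl z (hz z h).1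
    refine ⟨insert z P, by rw [card_insert_of_notMem hzP, hP], hPR.insert hz, ?_⟩
    rw [← hstep]
    intro p hp
    rcases mem_insert.1 hp with rfl | hp
    · exact hzdvd
    · exact (pow_dvd_pow 2 (Nat.sub_le _ _)).trans (hPdvd p hp)

end Construction

theorem exists_exp_triple {α : Type*} [Fintype α] (g : ℕ → α) :
    ∃ x y, 0 < x ∧ 0 < y ∧ g x = g y ∧ g (y * 2 ^ x) = g y := by
  by_contra! hg
  set R : Set α := {c | ∀ K, ∃ Y, DiffMono g c Y ∧ K ≤ #Y}
  obtain ⟨q, hq, hq2⟩ : ∃ q, (∀ c ∉ R, ∀ Y, DiffMono g c Y → #Y < q) ∧ 2 ≤ q := by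
    refine ((Filter.eventually_all.2 fun c => ?_).and (Filter.eventually_ge_atTop 2)).exists
    by_cases hc : c ∈ R
    · exact Filter.Eventually.of_forall fun _ h => absurd hc h
    · obtain ⟨Q, hQ⟩ : ∃ Q, ∀ Y, DiffMono g c Y → #Y < Q := by simpa [R] using hc
      exact Filter.eventually_atTop.2 ⟨Q, fun q hQq _ Y hY => (hQ Y hY).trans_le hQq⟩
  obtain ⟨N, hN⟩ := ramsey_pairs (α := α) (β := ℕ) fun _ => q
  -- chosen so that the window bound `#α * (Λ + T)` with `Λ = T + 1` leaves room for `N` steps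
  set K := 4 * Fintype.card α * N + 1
  obtain ⟨T, hT⟩ : ∃ T, ∀ c ∈ R, ∃ Y, DiffMono g c Y ∧ K ≤ #Y ∧ Y ⊆ range T := by
    refine (Filter.eventually_all.2 fun c => ?_).exists (f := Filter.atTop)
    by_cases hc : c ∈ R
    · obtain ⟨Y, hY, hKY⟩ := hc K
      obtain ⟨T, hT⟩ := Y.exists_nat_subset_range
      exact Filter.eventually_atTop.2 ⟨T, fun T' hT' _ =>
        ⟨Y, hY, hKY, hT.trans (range_subset_range.2 hT')⟩⟩
    · exact Filter.Eventually.of_forall fun _ h => absurd h hc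
  obtain ⟨P, hPcard, hPR⟩ := exists_card_eq_diffAvoids (Λ := T + 1) (k := N)
    (fun u hu A => card_richExponents_mul_le hg hT hu A (T + 1)) (by simp only [K]; nlinarith)
  obtain ⟨c, W, hWP, hqW, hW⟩ := hN (fun a b => g (b - a)) P (by omega)
  obtain ⟨a, ha, b, hb, hab⟩ : ∃ a ∈ W, ∃ b ∈ W, a < b := by
    obtain ⟨a, b, ha, hb, hne⟩ := one_lt_card_iff.1 (by omega : 1 < #W)
    rcases hne.lt_or_gt with h | h
    exacts [⟨a, ha, b, hb, h⟩, ⟨b, hb, a, ha, h⟩]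
  have hc : c ∉ R := hW a ha b hb hab ▸ hPR a (hWP ha) b (hWP hb) hab
  exact absurd (hq c hc W hW) (not_lt.2 hqW)

theorem stmt10 (r : ℕ) (C : Fin r → Set ℕ) (hcover : (⋃ i, C i) = Set.univ) :
    ∃ i, ∃ a b : ℕ, 2 ≤ a ∧ 2 ≤ b ∧ a ∈ C i ∧ b ∈ C i ∧ b ^ a ∈ C i := by
  choose colour hcolour using fun n => Set.mem_iUnion.1 (hcover ▸ Set.mem_univ n)
  obtain ⟨x, y, hx, hy, hxy, hyx⟩ := exists_exp_triple fun n => colour (2 ^ n)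
  refine ⟨colour (2 ^ y), 2 ^ x, 2 ^ y, le_self_pow₀ one_le_two hx.ne',
    le_self_pow₀ one_le_two hy.ne', hxy ▸ hcolour _, hcolour _, ?_⟩
  rw [← pow_mul, ← hyx]
  exact hcolour _
end

section
/- Let f(n,m) = 2^n·m and let U be an ultrafilter on ℕ with the property that for every A ∈ U and every L there exist b, c with b, c, b+ℓc ∈ A for all ℓ ≤ L. Then for every A ∈ f_*(U ⊗ U) there is an infinite sequence (a_n) such that for all i, j, k with i < 2j and 2j+1 < k, setting x = 2^{a_i}·a_{2j} and y = 2^{a_{2j+1}}·a_k, the three numbers x, y, and 2^x·y all lie in A. -/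
open scoped Classical

/-!
Build the sequence two terms at a time while shrinking a `U`-large set `S_j ⊆ B`, where
`B = {n | C n ∈ U}` and `C n = {m | 2 ^ n * m ∈ A}`. At stage `j`, the progression property of `U`
applied to `S_j` with length `max_{i < 2j} 2 ^ aᵢ` gives `b, c ∈ S_j` with `b + 2 ^ aᵢ * c ∈ S_j`
for all `i < 2j`. Put `a_{2j} = c`, `a_{2j+1} = b`, and intersect `S_j` with the sets
`C c`, `C b` and `C (b + 2 ^ aᵢ * c)`, which are `U`-large because their indices lie in `B`.
Every later term lies in all of these sets, and
`2 ^ (b + 2 ^ x * c) * y = 2 ^ (2 ^ x * c) * (2 ^ b * y)`.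
-/

open Filter

def Ultrafilter.HasProgressionPairs (U : Ultrafilter ℕ) : Prop :=
  ∀ A ∈ U, ∀ L : ℕ, ∃ b c : ℕ, b ∈ A ∧ c ∈ A ∧ ∀ ℓ ≤ L, b + ℓ * c ∈ A

theorem Ultrafilter.HasProgressionPairs.exists_pair {U : Ultrafilter ℕ}
    (hU : U.HasProgressionPairs) (g : ℕ → ℕ) {S : Set ℕ} (hS : S ∈ U) (F : Finset ℕ) :
    ∃ p : ℕ × ℕ, p.1 ∈ S ∧ p.2 ∈ S ∧ ∀ x ∈ F, p.1 + g x * p.2 ∈ S := by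
  obtain ⟨b, c, hb, hc, h⟩ := hU S hS (F.sup g)
  exact ⟨(b, c), hb, hc, fun x hx => h _ (Finset.le_sup hx)⟩

namespace ProgressionPairs

/-- `F` holds the terms of the sequence chosen so far. -/
structure Stage (U : Ultrafilter ℕ) (B : Set ℕ) where
  S : Set ℕ
  F : Finset ℕ
  mem : S ∈ U
  subset : S ⊆ B

variable {U : Ultrafilter ℕ} {B : Set ℕ}

noncomputable def Stage.pair (hU : U.HasProgressionPairs) (g : ℕ → ℕ) (p : Stage U B) :
    ℕ × ℕ :=
  (hU.exists_pair g p.mem p.F).choose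

theorem Stage.pair_spec (hU : U.HasProgressionPairs) (g : ℕ → ℕ) (p : Stage U B) :
    (p.pair hU g).1 ∈ p.S ∧ (p.pair hU g).2 ∈ p.S ∧
      ∀ x ∈ p.F, (p.pair hU g).1 + g x * (p.pair hU g).2 ∈ p.S :=
  (hU.exists_pair g p.mem p.F).choose_spec

noncomputable def Stage.next (hU : U.HasProgressionPairs) (g : ℕ → ℕ) (C : ℕ → Set ℕ)
    (hC : ∀ n ∈ B, C n ∈ U) (p : Stage U B) : Stage U B where
  S := p.S ∩ C (p.pair hU g).1 ∩ C (p.pair hU g).2 ∩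
    ⋂ x ∈ p.F, C ((p.pair hU g).1 + g x * (p.pair hU g).2)
  F := insert (p.pair hU g).1 (insert (p.pair hU g).2 p.F)
  mem := by
    obtain ⟨h₁, h₂, h₃⟩ := p.pair_spec hU g
    refine inter_mem (inter_mem (inter_mem p.mem (hC _ (p.subset h₁))) (hC _ (p.subset h₂))) ?_
    exact (biInter_finset_mem _).2 fun x hx => hC _ (p.subset (h₃ x hx))
  subset := fun _ hx => p.subset hx.1.1.1

section Construction

variable (hU : U.HasProgressionPairs) (g : ℕ → ℕ) (hB : B ∈ U) (C : ℕ → Set ℕ)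
  (hC : ∀ n ∈ B, C n ∈ U)

noncomputable def stage : ℕ → Stage U B
  | 0 => ⟨B, ∅, hB, subset_rfl⟩
  | j + 1 => (stage j).next hU g C hC

/-- Stage `j` produces the terms `2 * j` (second component) and `2 * j + 1` (first component). -/
noncomputable def seq (n : ℕ) : ℕ :=
  if n % 2 = 0 then ((stage hU g hB C hC (n / 2)).pair hU g).2
  else ((stage hU g hB C hC (n / 2)).pair hU g).1

theorem seq_two_mul (j : ℕ) :
    seq hU g hB C hC (2 * j) = ((stage hU g hB C hC j).pair hU g).2 := by
  simp [seq]

theorem seq_two_mul_add_one (j : ℕ) :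
    seq hU g hB C hC (2 * j + 1) = ((stage hU g hB C hC j).pair hU g).1 := by
  simp [seq, Nat.add_mod, show (2 * j + 1) / 2 = j by omega]

theorem antitone_stage_S : Antitone fun j => (stage hU g hB C hC j).S :=
  antitone_nat_of_succ_le fun _ _ hx => hx.1.1.1

theorem seq_mem_stage_S (n : ℕ) : seq hU g hB C hC n ∈ (stage hU g hB C hC (n / 2)).S := by
  have h := (stage hU g hB C hC (n / 2)).pair_spec hU g
  unfold seq
  split_ifs
  exacts [h.2.1, h.1]

theorem seq_mem_stage_F {i j : ℕ} (hi : i < 2 * j) :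
    seq hU g hB C hC i ∈ (stage hU g hB C hC j).F := by
  induction j with
  | zero => omega
  | succ j ih =>
    simp only [stage, Stage.next, Finset.mem_insert]
    obtain hi | rfl | rfl : i < 2 * j ∨ i = 2 * j ∨ i = 2 * j + 1 := by omega
    · exact Or.inr (Or.inr (ih hi))
    · exact Or.inr (Or.inl (seq_two_mul ..))
    · exact Or.inl (seq_two_mul_add_one ..)

theorem stage_S_subset_seq {i j : ℕ} (hi : i < 2 * j) :
    (stage hU g hB C hC j).S ⊆ C (seq hU g hB C hC i) := by
  refine (antitone_stage_S hU g hB C hC (show i / 2 + 1 ≤ j by omega)).trans ?_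
  obtain ⟨m, rfl | rfl⟩ : ∃ m, i = 2 * m ∨ i = 2 * m + 1 := ⟨i / 2, by omega⟩
  · rw [seq_two_mul, show 2 * m / 2 = m by omega]
    exact fun _ hx => hx.1.2
  · rw [seq_two_mul_add_one, show (2 * m + 1) / 2 = m by omega]
    exact fun _ hx => hx.1.1.2

theorem stage_S_subset_progression {i j k : ℕ} (hi : i < 2 * j) (hk : j < k) :
    (stage hU g hB C hC k).S ⊆
      C (seq hU g hB C hC (2 * j + 1) + g (seq hU g hB C hC i) * seq hU g hB C hC (2 * j)) := by
  refine (antitone_stage_S hU g hB C hC (show j + 1 ≤ k by omega)).trans ?_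
  rw [seq_two_mul, seq_two_mul_add_one]
  exact fun _ hx => Set.mem_iInter₂.1 hx.2 _ (seq_mem_stage_F hU g hB C hC hi)

end Construction

theorem exists_seq (hU : U.HasProgressionPairs) (g : ℕ → ℕ) (hB : B ∈ U) (C : ℕ → Set ℕ)
    (hC : ∀ n ∈ B, C n ∈ U) :
    ∃ a : ℕ → ℕ, ∀ i j k : ℕ, i < 2 * j → 2 * j + 1 < k →
      a (2 * j) ∈ C (a i) ∧ a k ∈ C (a (2 * j + 1)) ∧
        a k ∈ C (a (2 * j + 1) + g (a i) * a (2 * j)) := by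
  refine ⟨seq hU g hB C hC, fun i j k hi hk => ⟨?_, ?_, ?_⟩⟩
  · have h := seq_mem_stage_S hU g hB C hC (2 * j)
    rw [Nat.mul_div_cancel_left _ two_pos] at h
    exact stage_S_subset_seq hU g hB C hC hi h
  · exact stage_S_subset_seq hU g hB C hC (by omega) (seq_mem_stage_S hU g hB C hC k)
  · exact stage_S_subset_progression hU g hB C hC hi (by omega) (seq_mem_stage_S hU g hB C hC k)

end ProgressionPairs

theorem stmt13 (U : Ultrafilter ℕ)
    (hU : ∀ A ∈ U, ∀ L : ℕ, ∃ b c : ℕ, b ∈ A ∧ c ∈ A ∧ ∀ ℓ ≤ L, b + ℓ * c ∈ A)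
    (A : Set ℕ)
    (hA : {n : ℕ | {m : ℕ | 2 ^ n * m ∈ A} ∈ U} ∈ U) :
    ∃ a : ℕ → ℕ, ∀ i j k : ℕ, i < 2 * j → 2 * j + 1 < k →
      2 ^ (a i) * a (2 * j) ∈ A ∧
      2 ^ (a (2 * j + 1)) * a k ∈ A ∧
      2 ^ (2 ^ (a i) * a (2 * j)) * (2 ^ (a (2 * j + 1)) * a k) ∈ A := by
  obtain ⟨a, ha⟩ := ProgressionPairs.exists_seq hU (2 ^ ·) hA (fun n => {m | 2 ^ n * m ∈ A})
    fun _ hn => hn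
  refine ⟨a, fun i j k hi hk => ?_⟩
  obtain ⟨h₁, h₂, h₃⟩ := ha i j k hi hk
  refine ⟨h₁, h₂, ?_⟩
  have h₃ : 2 ^ (2 ^ a i * a (2 * j) + a (2 * j + 1)) * a k ∈ A := by rwa [add_comm]
  rwa [pow_add, mul_assoc] at h₃
end
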